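/- (Characterization of regular optima via strict inequality chains.) A feasible vector x of Problem 1 which is regular (i.e., not every coordinate satisfies x_h ∈ {m_h, M_h}) minimizes f(x) = ∑_{h∈H} A_h²/x_h over all feasible vectors of Problem 1 if and only if there exist disjoint sets L, U ⊆ H with L ∪ U ⊊ H such that x = x^{(L,U)} and, with L^c = H\L and U^c = H\U: max_{h∈L} A_h/m_h ≤ 1/s(L,U) < min_{h∈L^c} A_h/m_h, and max_{h∈U^c} A_h/M_h < 1/s(L,U) ≤ min_{h∈U} A_h/M_h (maxima over empty sets being −∞ and minima over empty sets being +∞). -/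

import Mathlib

open Finset

/-- Feasibility for Problem 1. -/
def Feas1 {ι : Type*} (H : Finset ι) (m M : ι → ℝ) (n : ℝ) (x : ι → ℝ) : Prop :=
  (∀ h ∈ H, 0 < x h) ∧ (∑ h ∈ H, x h = n) ∧ ∀ h ∈ H, m h ≤ x h ∧ x h ≤ M h

/-- The objective function of Problem 1. -/
noncomputable def obj {ι : Type*} (H : Finset ι) (A : ι → ℝ) (x : ι → ℝ) : ℝ :=
  ∑ h ∈ H, (A h) ^ 2 / x h

/-- The set function `s(L,U)`. -/
noncomputable def sLU {ι : Type*} [DecidableEq ι] (H : Finset ι) (A m M : ι → ℝ) (n : ℝ)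
    (L U : Finset ι) : ℝ :=
  (n - ∑ h ∈ L, m h - ∑ h ∈ U, M h) / ∑ h ∈ H \ (L ∪ U), A h

/-- The allocation `x^{(L,U)}`. -/
noncomputable def xLU {ι : Type*} [DecidableEq ι] (H : Finset ι) (A m M : ι → ℝ) (n : ℝ)
    (L U : Finset ι) (h : ι) : ℝ :=
  if h ∈ L then m h else if h ∈ U then M h else A h * sLU H A m M n L U


/-!
The objective is a sum of convex functions `t ↦ A_h² / t`, so a feasible `x` is optimal exactly
when it meets the KKT conditions: for some level `s > 0`, every coordinate strictly inside its box
equals `A_h s`, a coordinate at its lower bound has `A_h s ≤ m_h`, one at its upper bound has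
`A_h s ≥ M_h`. Sufficiency is the tangent-line inequality of `t ↦ A² / t`, summed over `H`.
Necessity: moving a small mass from `j` to `i` lowers the objective unless `A_i / x_i ≤ A_j / x_j`;
a regular `x` has a free coordinate `h₀`, whose ratio fixes the level `s = x_{h₀} / A_{h₀}`. Then
`L` and `U` are the coordinates clamped below and above, and the budget constraint forces
`s = s(L,U)`.
-/

open Filter Topology

section WaterLevel

variable {ι : Type*} {H : Finset ι} {A m M x : ι → ℝ} {n s : ℝ}

/-- The KKT conditions of Problem 1 at level `s`, with Lagrange multiplier `1 / s ^ 2`. -/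
def IsWaterLevel (H : Finset ι) (A m M x : ι → ℝ) (s : ℝ) : Prop :=
  ∀ h ∈ H, (x h < M h → A h * s ≤ x h) ∧ (m h < x h → x h ≤ A h * s)

lemma sub_div_sq_le_sq_div_sub_sq_div {a s x t : ℝ} (hs : 0 < s) (hx : 0 < x) (ht : 0 < t)
    (ha : 0 ≤ a) (hup : x < t → a * s ≤ x) (hdown : t < x → x ≤ a * s) :
    (x - t) / s ^ 2 ≤ a ^ 2 / t - a ^ 2 / x := by
  have key : a ^ 2 / t - a ^ 2 / x - (x - t) / s ^ 2
      = (x - t) * ((a * s) ^ 2 - t * x) / (s ^ 2 * t * x) := by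
    field_simp
  rw [← sub_nonneg, key]
  refine div_nonneg ?_ (by positivity)
  rcases lt_trichotomy t x with htx | rfl | hxt
  · have := hdown htx
    exact mul_nonneg (by linarith) (by nlinarith)
  · simp
  · have := hup hxt
    exact mul_nonneg_of_nonpos_of_nonpos (by linarith) (by nlinarith [mul_nonneg ha hs.le])

theorem obj_le_of_isWaterLevel (hA : ∀ h ∈ H, 0 ≤ A h) (hs : 0 < s) (hx : Feas1 H m M n x)
    (hlevel : IsWaterLevel H A m M x s) {y : ι → ℝ} (hy : Feas1 H m M n y) :
    obj H A x ≤ obj H A y := by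
  obtain ⟨hxpos, hxsum, -⟩ := hx
  obtain ⟨hypos, hysum, hybd⟩ := hy
  have hterm : ∀ h ∈ H, (x h - y h) / s ^ 2 ≤ A h ^ 2 / y h - A h ^ 2 / x h := fun h hh =>
    sub_div_sq_le_sq_div_sub_sq_div hs (hxpos h hh) (hypos h hh) (hA h hh)
      (fun hlt => (hlevel h hh).1 (hlt.trans_le (hybd h hh).2))
      (fun hlt => (hlevel h hh).2 ((hybd h hh).1.trans_lt hlt))
  have hsum := Finset.sum_le_sum hterm
  rw [← Finset.sum_div, Finset.sum_sub_distrib, Finset.sum_sub_distrib, hxsum, hysum, sub_self,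
    zero_div] at hsum
  unfold obj
  linarith

section

variable [DecidableEq ι]

def transfer (x : ι → ℝ) (i j : ι) (ε : ℝ) (h : ι) : ℝ :=
  if h = i then x i + ε else if h = j then x j - ε else x h

lemma sum_transfer (g : ι → ℝ → ℝ) {i j : ι} (hi : i ∈ H) (hj : j ∈ H) (hij : i ≠ j) (ε : ℝ) :
    ∑ h ∈ H, g h (transfer x i j ε h) =
      ∑ h ∈ H, g h (x h) + (g i (x i + ε) - g i (x i)) + (g j (x j - ε) - g j (x j)) := by
  have hdiff : ∑ h ∈ H, (g h (transfer x i j ε h) - g h (x h)) =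
      ∑ h ∈ {i, j}, (g h (transfer x i j ε h) - g h (x h)) := by
    refine (Finset.sum_subset (Finset.insert_subset hi (Finset.singleton_subset_iff.2 hj))
      fun h _ hh => ?_).symm
    simp_all [transfer]
  have hti : transfer x i j ε i = x i + ε := if_pos rfl
  have htj : transfer x i j ε j = x j - ε := by simp [transfer, hij.symm]
  rw [Finset.sum_pair hij, Finset.sum_sub_distrib, hti, htj] at hdiff
  linarith

lemma feas1_transfer (hx : Feas1 H m M n x) {i j : ι} (hi : i ∈ H) (hj : j ∈ H) (hij : i ≠ j)
    {ε : ℝ} (hε : 0 < ε) (hεi : ε < M i - x i) (hεj : ε < x j - m j) (hεj' : ε < x j) :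
    Feas1 H m M n (transfer x i j ε) := by
  obtain ⟨hpos, hsum, hbd⟩ := hx
  refine ⟨fun h hh => ?_, ?_, fun h hh => ?_⟩
  · unfold transfer
    split_ifs
    · linarith [hpos i hi]
    · linarith
    · exact hpos h hh
  · rw [sum_transfer (fun _ t => t) hi hj hij, hsum]
    ring
  · have := hbd h hh
    unfold transfer
    split_ifs <;> subst_vars <;> constructor <;> linarith

theorem div_le_div_of_isMin (hx : Feas1 H m M n x)
    (hopt : ∀ y, Feas1 H m M n y → obj H A x ≤ obj H A y) {i j : ι} (hi : i ∈ H) (hj : j ∈ H)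
    (hij : i ≠ j) (hAj : 0 ≤ A j) (hiM : x i < M i) (hjm : m j < x j) :
    A i / x i ≤ A j / x j := by
  by_contra! hlt
  have hxi := hx.1 i hi
  have hxj := hx.1 j hj
  set φ : ℝ → ℝ := fun ε => A j ^ 2 / (x j * (x j - ε)) - A i ^ 2 / (x i * (x i + ε))
  have hφ0 : φ 0 < 0 := by
    have := pow_lt_pow_left₀ hlt (div_nonneg hAj hxj.le) two_ne_zero
    simp only [φ, add_zero, sub_zero, ← sq, ← div_pow]
    linarith
  have hφ : ContinuousAt φ 0 := by
    fun_prop (disch := simp [hxi.ne', hxj.ne'])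
  have hsmall : ∀ᶠ ε in 𝓝 (0 : ℝ), φ ε < 0 ∧ ε < M i - x i ∧ ε < x j - m j ∧ ε < x j :=
    (hφ.eventually_lt continuousAt_const hφ0).and <| (eventually_lt_nhds (sub_pos.2 hiM)).and <|
      (eventually_lt_nhds (sub_pos.2 hjm)).and (eventually_lt_nhds hxj)
  obtain ⟨ε, ⟨hφε, hεi, hεj, hεj'⟩, hε : 0 < ε⟩ :=
    ((hsmall.filter_mono nhdsWithin_le_nhds).and (self_mem_nhdsWithin (s := Set.Ioi 0))).exists
  have hobj : obj H A (transfer x i j ε) = obj H A x + ε * φ ε := by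
    have : x j - ε ≠ 0 := by linarith
    have : x i + ε ≠ 0 := by linarith
    unfold obj
    rw [sum_transfer (fun h t => A h ^ 2 / t) hi hj hij]
    simp only [φ]
    field_simp
    ring
  have := hopt _ (feas1_transfer hx hi hj hij hε hεi hεj hεj')
  linarith [mul_neg_of_pos_of_neg hε hφε]

theorem isWaterLevel_of_isMin (hA : ∀ h ∈ H, 0 < A h) (hx : Feas1 H m M n x)
    (hopt : ∀ y, Feas1 H m M n y → obj H A x ≤ obj H A y) {h₀ : ι} (hh₀ : h₀ ∈ H)
    (hm₀ : m h₀ < x h₀) (hM₀ : x h₀ < M h₀) :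
    IsWaterLevel H A m M x (x h₀ / A h₀) := by
  intro h hh
  have hx₀ := hx.1 h₀ hh₀
  have hxh := hx.1 h hh
  have hA₀ := hA h₀ hh₀
  rw [mul_div_assoc', div_le_iff₀ hA₀, le_div_iff₀ hA₀]
  constructor
  · intro hMh
    have : A h / x h ≤ A h₀ / x h₀ := by
      rcases eq_or_ne h h₀ with rfl | hne
      · rfl
      · exact div_le_div_of_isMin hx hopt hh hh₀ hne hA₀.le hMh hm₀
    rw [div_le_div_iff₀ hxh hx₀] at this
    linarith
  · intro hmh
    have : A h₀ / x h₀ ≤ A h / x h := by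
      rcases eq_or_ne h h₀ with rfl | hne
      · rfl
      · exact div_le_div_of_isMin hx hopt hh₀ hh hne.symm (hA h hh).le hM₀ hmh
    rw [div_le_div_iff₀ hx₀ hxh] at this
    linarith

lemma eq_ite_of_waterLevel {a s t lo hi : ℝ} (hlo : lo ≤ t) (hhi : t ≤ hi)
    (hup : t < hi → a * s ≤ t) (hdown : lo < t → t ≤ a * s) :
    t = if a * s ≤ lo then lo else if hi ≤ a * s then hi else a * s := by
  split_ifs with hl hh
  · by_contra hne
    have hgt := lt_of_le_of_ne hlo (Ne.symm hne)
    linarith [hdown hgt]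
  · by_contra hne
    have hlt := lt_of_le_of_ne hhi hne
    linarith [hup hlt]
  · push Not at hl hh
    rcases hhi.lt_or_eq with hlt | rfl
    · rcases hlo.lt_or_eq with hgt | rfl
      · exact le_antisymm (hdown hgt) (hup hlt)
      · linarith [hup hlt]
    · linarith [hdown (hl.trans hh)]

lemma sLU_eq_of_feas1 {L U : Finset ι} (hLU : L ∪ U ⊆ H) (hdisj : Disjoint L U)
    (hA : 0 < ∑ h ∈ H \ (L ∪ U), A h) (hsum : ∑ h ∈ H, x h = n) (hxL : ∀ h ∈ L, x h = m h)
    (hxU : ∀ h ∈ U, x h = M h) (hxF : ∀ h ∈ H \ (L ∪ U), x h = A h * s) :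
    sLU H A m M n L U = s := by
  have hsplit := Finset.sum_sdiff hLU (f := x)
  rw [Finset.sum_union hdisj, hsum, Finset.sum_congr rfl hxF, Finset.sum_congr rfl hxL,
    Finset.sum_congr rfl hxU, ← Finset.sum_mul] at hsplit
  rw [sLU, div_eq_iff hA.ne']
  linarith

theorem exists_chains_of_isWaterLevel (hA : ∀ h ∈ H, 0 < A h)
    (hm : ∀ h ∈ H, 0 < m h) (hmM : ∀ h ∈ H, m h < M h) (hx : Feas1 H m M n x) (hs : 0 < s)
    (hlevel : IsWaterLevel H A m M x s) {h₀ : ι} (hh₀ : h₀ ∈ H) (hm₀ : m h₀ < x h₀)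
    (hM₀ : x h₀ < M h₀) :
    ∃ L U : Finset ι, L ⊆ H ∧ U ⊆ H ∧ Disjoint L U ∧ L ∪ U ⊂ H ∧
      (∀ h ∈ H, x h = xLU H A m M n L U h) ∧
      (∀ h ∈ L, A h / m h ≤ 1 / sLU H A m M n L U) ∧
      (∀ h ∈ H \ L, 1 / sLU H A m M n L U < A h / m h) ∧
      (∀ h ∈ H \ U, A h / M h < 1 / sLU H A m M n L U) ∧
      (∀ h ∈ U, 1 / sLU H A m M n L U ≤ A h / M h) := by
  set L := H.filter fun h => A h * s ≤ m h
  set U := H.filter fun h => M h ≤ A h * s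
  have hclamp : ∀ h ∈ H, x h = if h ∈ L then m h else if h ∈ U then M h else A h * s := by
    intro h hh
    simpa only [L, U, Finset.mem_filter, hh, true_and] using
      eq_ite_of_waterLevel (hx.2.2 h hh).1 (hx.2.2 h hh).2 (hlevel h hh).1 (hlevel h hh).2
  have hdisj : Disjoint L U :=
    Finset.disjoint_filter.2 fun h hh hL hU => by linarith [hmM h hh]
  have hx₀ : x h₀ = A h₀ * s := le_antisymm ((hlevel h₀ hh₀).2 hm₀) ((hlevel h₀ hh₀).1 hM₀)
  have hfree : h₀ ∈ H \ (L ∪ U) := by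
    simp only [L, U, Finset.mem_sdiff, Finset.mem_union, Finset.mem_filter, hh₀, true_and, not_or,
      not_le]
    exact ⟨hx₀ ▸ hm₀, hx₀ ▸ hM₀⟩
  have hLU : L ∪ U ⊆ H := Finset.union_subset (Finset.filter_subset _ _) (Finset.filter_subset _ _)
  have hsLU : sLU H A m M n L U = s := by
    refine sLU_eq_of_feas1 hLU hdisj
      (Finset.sum_pos (fun h hh => hA h (Finset.mem_sdiff.1 hh).1) ⟨h₀, hfree⟩) hx.2.1
      (fun h hh => by simp [hclamp h (hLU (Finset.mem_union_left U hh)), hh]) (fun h hh => ?_)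
      (fun h hh => ?_)
    · have hhL : h ∉ L := Finset.disjoint_right.1 hdisj hh
      simp [hclamp h (hLU (Finset.mem_union_right L hh)), hh, hhL]
    · simp only [Finset.mem_sdiff, Finset.mem_union, not_or] at hh
      simp [hclamp h hh.1, hh.2.1, hh.2.2]
  refine ⟨L, U, Finset.filter_subset _ _, Finset.filter_subset _ _, hdisj,
    Finset.ssubset_iff_of_subset hLU |>.2 ⟨h₀, hh₀, (Finset.mem_sdiff.1 hfree).2⟩,
    fun h hh => by rw [xLU, hsLU, hclamp h hh], ?_, ?_, ?_, ?_⟩ <;>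
    intro h hh <;>
    simp only [L, U, Finset.mem_sdiff, Finset.mem_filter, not_and, not_le] at hh <;>
    rw [hsLU]
  · rw [div_le_div_iff₀ (hm h hh.1) hs, one_mul]
    exact hh.2
  · rw [div_lt_div_iff₀ hs (hm h hh.1), one_mul]
    exact hh.2 hh.1
  · rw [div_lt_div_iff₀ ((hm h hh.1).trans (hmM h hh.1)) hs, one_mul]
    exact hh.2 hh.1
  · rw [div_le_div_iff₀ hs ((hm h hh.1).trans (hmM h hh.1)), one_mul]
    exact hh.2

theorem isWaterLevel_sLU_of_eq_xLU (hA : ∀ h ∈ H, 0 < A h)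
    (hx : Feas1 H m M n x) {L U : Finset ι} (hLU : L ∪ U ⊂ H)
    (hxeq : ∀ h ∈ H, x h = xLU H A m M n L U h)
    (hL : ∀ h ∈ L, A h / m h ≤ 1 / sLU H A m M n L U)
    (hU : ∀ h ∈ U, 1 / sLU H A m M n L U ≤ A h / M h) :
    0 < sLU H A m M n L U ∧ IsWaterLevel H A m M x (sLU H A m M n L U) := by
  set s := sLU H A m M n L U
  have hs : 0 < s := by
    obtain ⟨h₁, hh₁, hh₁LU⟩ := Finset.exists_of_ssubset hLU
    rw [Finset.mem_union, not_or] at hh₁LU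
    have hx₁ := hx.1 h₁ hh₁
    rw [hxeq h₁ hh₁, xLU, if_neg hh₁LU.1, if_neg hh₁LU.2] at hx₁
    exact pos_of_mul_pos_right hx₁ (hA h₁ hh₁).le
  refine ⟨hs, fun h hh => ?_⟩
  have hxh := hx.1 h hh
  rw [hxeq h hh, xLU] at hxh ⊢
  split_ifs at hxh ⊢ with hhL hhU
  · have := hL h hhL
    rw [div_le_div_iff₀ hxh hs, one_mul] at this
    exact ⟨fun _ => this, fun hlt => absurd hlt (lt_irrefl _)⟩
  · have := hU h hhU
    rw [div_le_div_iff₀ hs hxh, one_mul] at this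
    exact ⟨fun hlt => absurd hlt (lt_irrefl _), fun _ => this⟩
  · exact ⟨fun _ => le_rfl, fun _ => le_rfl⟩

end

end WaterLevel

theorem regular_optimum_iff_strict_chains_general {ι : Type*} [DecidableEq ι] (H : Finset ι)
    (A m M : ι → ℝ) (n : ℝ)
    (hA : ∀ h ∈ H, 0 < A h) (hm : ∀ h ∈ H, 0 < m h) (hmM : ∀ h ∈ H, m h < M h)
    (x : ι → ℝ) (hfeas : Feas1 H m M n x)
    (hreg : ¬ ∀ h ∈ H, x h = m h ∨ x h = M h) :
    (∀ y, Feas1 H m M n y → obj H A x ≤ obj H A y) ↔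
      ∃ L U : Finset ι, L ⊆ H ∧ U ⊆ H ∧ Disjoint L U ∧ L ∪ U ⊂ H ∧
        (∀ h ∈ H, x h = xLU H A m M n L U h) ∧
        (∀ h ∈ L, A h / m h ≤ 1 / sLU H A m M n L U) ∧
        (∀ h ∈ H \ L, 1 / sLU H A m M n L U < A h / m h) ∧
        (∀ h ∈ H \ U, A h / M h < 1 / sLU H A m M n L U) ∧
        (∀ h ∈ U, 1 / sLU H A m M n L U ≤ A h / M h) := by
  constructor
  · intro hopt
    push Not at hreg
    obtain ⟨h₀, hh₀, hne_m, hne_M⟩ := hreg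
    have hm₀ : m h₀ < x h₀ := lt_of_le_of_ne (hfeas.2.2 h₀ hh₀).1 (Ne.symm hne_m)
    have hM₀ : x h₀ < M h₀ := lt_of_le_of_ne (hfeas.2.2 h₀ hh₀).2 hne_M
    exact exists_chains_of_isWaterLevel hA hm hmM hfeas (div_pos (hfeas.1 h₀ hh₀) (hA h₀ hh₀))
      (isWaterLevel_of_isMin hA hfeas hopt hh₀ hm₀ hM₀) hh₀ hm₀ hM₀
  · rintro ⟨L, U, -, -, -, hLU, hxeq, hL, -, -, hU⟩ y hy
    obtain ⟨hs, hlevel⟩ := isWaterLevel_sLU_of_eq_xLU hA hfeas hLU hxeq hL hU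
    exact obj_le_of_isWaterLevel (fun h hh => (hA h hh).le) hs hfeas hlevel hy

/-- Characterization of regular optima via strict inequality chains: a feasible regular
allocation `x` is optimal for Problem 1 iff `x = x^{(L,U)}` on `H` for some disjoint
`L, U ⊆ H` with `L ∪ U ⊊ H` satisfying
`max_{h∈L} A_h/m_h ≤ 1/s(L,U) < min_{h∈H\L} A_h/m_h` and
`max_{h∈H\U} A_h/M_h < 1/s(L,U) ≤ min_{h∈U} A_h/M_h`
(maxima/minima over empty sets read as `−∞`/`+∞`, i.e. the corresponding conditions are
vacuous, which is expressed below by universal quantification). -/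
theorem regular_optimum_iff_strict_chains {ι : Type*} [DecidableEq ι] (H : Finset ι)
    (hH : H.Nonempty) (A m M : ι → ℝ) (n : ℝ)
    (hA : ∀ h ∈ H, 0 < A h) (hm : ∀ h ∈ H, 0 < m h) (hmM : ∀ h ∈ H, m h < M h)
    (hn₁ : ∑ h ∈ H, m h ≤ n) (hn₂ : n ≤ ∑ h ∈ H, M h)
    (x : ι → ℝ) (hfeas : Feas1 H m M n x)
    (hreg : ¬ ∀ h ∈ H, x h = m h ∨ x h = M h) :
    (∀ y, Feas1 H m M n y → obj H A x ≤ obj H A y) ↔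
      ∃ L U : Finset ι, L ⊆ H ∧ U ⊆ H ∧ Disjoint L U ∧ L ∪ U ⊂ H ∧
        (∀ h ∈ H, x h = xLU H A m M n L U h) ∧
        (∀ h ∈ L, A h / m h ≤ 1 / sLU H A m M n L U) ∧
        (∀ h ∈ H \ L, 1 / sLU H A m M n L U < A h / m h) ∧
        (∀ h ∈ H \ U, A h / M h < 1 / sLU H A m M n L U) ∧
        (∀ h ∈ U, 1 / sLU H A m M n L U ≤ A h / M h) :=
  regular_optimum_iff_strict_chains_general H A m M n hA hm hmM x hfeas hreg
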